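/- Let d ≥ 1 and let f : ℝ^d → ℝ be a smooth ℤ^d-periodic function with zero mean, ∫_{[0,1]^d} f(z) dz = 0. Then there exists a constant C (depending on f) such that for every ε > 0 and every continuously differentiable compactly supported function ψ : ℝ^d → ℝ, |∫_{ℝ^d} f(x/ε) ψ(x) dx| ≤ C ε ∫_{ℝ^d} |∇ψ(x)| dx. -/

import Mathlib

open MeasureTheory Real Pointwise

/-- The unit cell `[0,1]^d` in Euclidean space. -/
def unitCell (d : ℕ) : Set (EuclideanSpace ℝ (Fin d)) :=
  {z | ∀ i, z i ∈ Set.Icc (0 : ℝ) 1}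

namespace Stmt15Aux

noncomputable def bE (d : ℕ) : Module.Basis (Fin d) ℝ (EuclideanSpace ℝ (Fin d)) :=
  PiLp.basisFun 2 ℝ (Fin d)

lemma unitCell_eq_parallelepiped (d : ℕ) :
    unitCell d = parallelepiped (bE d) := by
  rw [parallelepiped_basis_eq]
  ext x
  simp [unitCell, bE, PiLp.basisFun_repr]

lemma isCompact_unitCell (d : ℕ) : IsCompact (unitCell d) := by
  rw [unitCell_eq_parallelepiped]
  rw [parallelepiped]
  exact (isCompact_Icc).image (by fun_prop)

lemma unitCell_ae (d : ℕ) :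
    (ZSpan.fundamentalDomain (bE d) : Set (EuclideanSpace ℝ (Fin d))) =ᵐ[volume] unitCell d := by
  rw [unitCell_eq_parallelepiped]
  exact ZSpan.fundamentalDomain_ae_parallelepiped (bE d) volume


lemma f_invariant {d : ℕ} {f : EuclideanSpace ℝ (Fin d) → ℝ}
    (hf_per : ∀ (z : EuclideanSpace ℝ (Fin d)) (i : Fin d),
      f (z + EuclideanSpace.single i 1) = f z)
    (v : EuclideanSpace ℝ (Fin d))
    (hv : v ∈ Submodule.span ℤ (Set.range (bE d)))
    (x : EuclideanSpace ℝ (Fin d)) : f (v + x) = f x := by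
  let S : Submodule ℤ (EuclideanSpace ℝ (Fin d)) :=
  { carrier := {w | ∀ y, f (w + y) = f y}
    add_mem' := by
      intro a b ha hb y
      have h : a + b + y = a + (b + y) := add_assoc a b y
      rw [h, ha, hb]
    zero_mem' := by intro y; rw [zero_add]
    smul_mem' := by
      intro n w hw
      induction n using Int.induction_on with
      | zero => intro y; rw [zero_smul, zero_add]
      | succ k ih =>
        intro y
        have h1 : ((k : ℤ) + 1) • w + y = w + ((k : ℤ) • w + y) := by
          rw [add_smul, one_smul]; abel
        rw [h1, hw, ih]
      | pred k ih =>
        intro y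
        have h1 : w + ((-(k : ℤ) - 1) • w + y) = (-(k : ℤ)) • w + y := by
          rw [sub_smul, one_smul]; abel
        have := hw ((-(k : ℤ) - 1) • w + y)
        rw [h1] at this
        rw [← this, ih] }
  have hr : Set.range (bE d) ⊆ S := by
    rintro _ ⟨i, rfl⟩
    intro y
    have h2 : (bE d) i + y = y + EuclideanSpace.single i 1 := by
      rw [add_comm]
      congr 1
      ext j
      simp [bE, PiLp.basisFun_apply, EuclideanSpace.single_apply, Pi.single_apply]
    rw [h2, hf_per]
  exact Submodule.span_le.mpr hr (by exact hv) x

lemma exists_bound {d : ℕ} {f : EuclideanSpace ℝ (Fin d) → ℝ}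
    (hf_cont : Continuous f)
    (hf_per : ∀ (z : EuclideanSpace ℝ (Fin d)) (i : Fin d),
      f (z + EuclideanSpace.single i 1) = f z) :
    ∃ M : ℝ, 0 ≤ M ∧ ∀ x, |f x| ≤ M := by
  obtain ⟨C, hC⟩ := (isCompact_unitCell d).exists_bound_of_continuousOn hf_cont.continuousOn
  refine ⟨max C 0, le_max_right _ _, fun x => ?_⟩
  have hmem : ZSpan.fract (bE d) x ∈ unitCell d := by
    rw [unitCell_eq_parallelepiped]
    exact ZSpan.fundamentalDomain_subset_parallelepiped (bE d)
      (ZSpan.fract_mem_fundamentalDomain (bE d) x)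
  have hx : (↑(ZSpan.floor (bE d) x) : EuclideanSpace ℝ (Fin d)) + ZSpan.fract (bE d) x = x := by
    rw [ZSpan.fract_apply]; abel
  have := f_invariant hf_per (↑(ZSpan.floor (bE d) x)) (ZSpan.floor (bE d) x).2
    (ZSpan.fract (bE d) x)
  rw [hx] at this
  rw [this]
  exact le_trans (hC _ hmem) (le_max_left _ _)

lemma measurableSet_unitCell (d : ℕ) : MeasurableSet (unitCell d) := by
  have : unitCell d = ⋂ i, (fun z : EuclideanSpace ℝ (Fin d) => z i) ⁻¹' Set.Icc (0:ℝ) 1 := by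
    ext z; simp [unitCell]
  rw [this]
  exact MeasurableSet.iInter fun i =>
    (measurableSet_Icc).preimage (by exact (continuous_apply i).measurable.comp (WithLp.measurable_ofLp 2 (Fin d → ℝ)))

lemma volume_unitCell (d : ℕ) : volume (unitCell d) = 1 := by
  have h : unitCell d =
      (WithLp.ofLp : EuclideanSpace ℝ (Fin d) → (Fin d → ℝ)) ⁻¹' (Set.pi Set.univ fun _ => Set.Icc (0:ℝ) 1) := by
    ext z; simp [unitCell, Set.mem_pi, Pi.le_def, forall_and]
  rw [h, (PiLp.volume_preserving_ofLp (Fin d)).measure_preimage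
    ((MeasurableSet.univ_pi fun _ => measurableSet_Icc).nullMeasurableSet)]
  simp [volume_Icc_pi]

lemma norm_le_sqrt_of_mem_unitCell {d : ℕ} {h : EuclideanSpace ℝ (Fin d)}
    (hh : h ∈ unitCell d) : ‖h‖ ≤ Real.sqrt d := by
  rw [EuclideanSpace.norm_eq]
  apply Real.sqrt_le_sqrt
  calc ∑ i, ‖h i‖ ^ 2 ≤ ∑ _i : Fin d, 1 := by
        apply Finset.sum_le_sum
        intro i _
        have h1 := (hh i).1
        have h2 := (hh i).2
        have : |h i| ≤ 1 := abs_le.mpr ⟨by linarith, h2⟩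
        calc ‖h i‖ ^ 2 = |h i| ^ 2 := rfl
          _ ≤ 1 ^ 2 := by apply pow_le_pow_left₀ (abs_nonneg _) this
          _ = 1 := one_pow 2
    _ = (d : ℝ) := by simp

lemma key_zero {d : ℕ} {f : EuclideanSpace ℝ (Fin d) → ℝ}
    (hf_cont : Continuous f)
    (hf_per : ∀ (z : EuclideanSpace ℝ (Fin d)) (i : Fin d),
      f (z + EuclideanSpace.single i 1) = f z)
    (hf_mean : ∫ z in unitCell d, f z = 0)
    (y : EuclideanSpace ℝ (Fin d)) :
    ∫ h in unitCell d, f (y + h) = 0 := by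
  set L := Submodule.span ℤ (Set.range (bE d)) with hL
  have hfd : IsAddFundamentalDomain ↥L (ZSpan.fundamentalDomain (bE d)) volume :=
    ZSpan.isAddFundamentalDomain (bE d) volume
  haveI : VAddCommClass (EuclideanSpace ℝ (Fin d)) ↥L (EuclideanSpace ℝ (Fin d)) :=
    ⟨fun a g x => by show a + (↑g + x) = ↑g + (a + x); abel⟩
  have hfd' : IsAddFundamentalDomain ↥L (y +ᵥ ZSpan.fundamentalDomain (bE d)) volume :=
    hfd.vadd_of_comm y
  have hinv : ∀ (g : ↥L) (x : EuclideanSpace ℝ (Fin d)), f (g +ᵥ x) = f x := by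
    intro g x
    exact f_invariant hf_per g g.2 x
  have step1 : ∫ h in unitCell d, f (y + h) = ∫ h in ZSpan.fundamentalDomain (bE d), f (y + h) :=
    setIntegral_congr_set (unitCell_ae d).symm
  have step2 : ∫ h in ZSpan.fundamentalDomain (bE d), f (y + h)
      = ∫ u in y +ᵥ ZSpan.fundamentalDomain (bE d), f u := by
    have hemb : MeasurableEmbedding (fun x : EuclideanSpace ℝ (Fin d) => y + x) :=
      (MeasurableEquiv.addLeft y).measurableEmbedding
    have hpre : (fun x : EuclideanSpace ℝ (Fin d) => y + x) ⁻¹'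
        (y +ᵥ ZSpan.fundamentalDomain (bE d)) = ZSpan.fundamentalDomain (bE d) := by
      ext x
      simp [Set.mem_vadd_set_iff_neg_vadd_mem, vadd_eq_add]
    have := (measurePreserving_add_left volume y).setIntegral_preimage_emb hemb f
      (y +ᵥ ZSpan.fundamentalDomain (bE d))
    rw [hpre] at this
    exact this
  haveI : MeasurableVAdd ↥L (EuclideanSpace ℝ (Fin d)) :=
    { measurable_const_vadd := fun c => by
        have : Measurable fun x : EuclideanSpace ℝ (Fin d) => (c : EuclideanSpace ℝ (Fin d)) + x :=
          measurable_const_add _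
        exact this,
      measurable_vadd_const := fun x => by
        have : Measurable fun c : ↥L => (c : EuclideanSpace ℝ (Fin d)) + x :=
          measurable_subtype_coe.add_const x
        exact this }
  haveI : VAddInvariantMeasure ↥L (EuclideanSpace ℝ (Fin d)) volume :=
    ⟨fun c s hs => by
      show volume ((fun x : EuclideanSpace ℝ (Fin d) => c +ᵥ x) ⁻¹' s) = volume s
      have hc : (fun x : EuclideanSpace ℝ (Fin d) => c +ᵥ x)
          = fun x : EuclideanSpace ℝ (Fin d) => (c : EuclideanSpace ℝ (Fin d)) + x := rfl
      rw [hc]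
      exact measure_preimage_add volume _ s⟩
  have step3 : ∫ u in y +ᵥ ZSpan.fundamentalDomain (bE d), f u
      = ∫ u in ZSpan.fundamentalDomain (bE d), f u :=
    hfd'.setIntegral_eq hfd hinv
  have step4 : ∫ u in ZSpan.fundamentalDomain (bE d), f u = ∫ z in unitCell d, f z :=
    setIntegral_congr_set (unitCell_ae d)
  rw [step1, step2, step3, step4, hf_mean]

lemma l1_translation {d : ℕ} {ψ : EuclideanSpace ℝ (Fin d) → ℝ}
    (hψ : ContDiff ℝ 1 ψ) (hsupp : HasCompactSupport ψ)
    (v : EuclideanSpace ℝ (Fin d)) :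
    ∫ x, |ψ x - ψ (x - v)| ≤ ‖v‖ * ∫ x, ‖fderiv ℝ ψ x‖ := by
  set g := fderiv ℝ ψ with hg
  have hgc : Continuous g := hψ.continuous_fderiv one_ne_zero
  have hgs : HasCompactSupport g := (hsupp.fderiv (𝕜 := ℝ))
  have hgi : Integrable (fun x => ‖g x‖) := hgc.norm.integrable_of_hasCompactSupport hgs.norm
  set I := ∫ x, ‖g x‖ with hI
  set F : EuclideanSpace ℝ (Fin d) → ℝ → ℝ :=
    fun x t => ‖g (x + (t - 1) • v)‖ with hF
  have hFcont : Continuous (Function.uncurry F) := by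
    apply hgc.norm.comp
    exact continuous_fst.add ((continuous_snd.sub continuous_const).smul continuous_const)
  -- pointwise bound
  have key : ∀ x, |ψ x - ψ (x - v)| ≤ ‖v‖ * ∫ t in (0:ℝ)..1, F x t := by
    intro x
    set c : ℝ → EuclideanSpace ℝ (Fin d) := fun t => x + (t - 1) • v with hc
    have hcder : ∀ t : ℝ, HasDerivAt c v t := by
      intro t
      have h0 : HasDerivAt (fun s : ℝ => (s - 1) • v) ((1:ℝ) • v) t :=
        ((hasDerivAt_id t).sub_const 1).smul_const v
      have h0' := h0.const_add x
      rw [one_smul] at h0'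
      exact h0'
    have hder : ∀ t : ℝ, HasDerivAt (fun s => ψ (c s)) ((g (c t)) v) t := by
      intro t
      exact ((hψ.differentiable one_ne_zero (c t)).hasFDerivAt).comp_hasDerivAt t (hcder t)
    have hcont : Continuous fun t => (g (c t)) v := by
      apply Continuous.clm_apply (hgc.comp (by fun_prop)) continuous_const
    have hftc := intervalIntegral.integral_eq_sub_of_hasDerivAt
      (f := fun s => ψ (c s)) (f' := fun t => (g (c t)) v)
      (fun t _ => hder t) (hcont.intervalIntegrable 0 1)
    have hc1 : c 1 = x := by simp [hc]
    have hc0 : c 0 = x - v := by simp [hc]; abel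
    simp only [hc1, hc0] at hftc
    rw [← hftc]
    calc |∫ t in (0:ℝ)..1, (g (c t)) v| ≤ ∫ t in (0:ℝ)..1, |(g (c t)) v| :=
          intervalIntegral.abs_integral_le_integral_abs (by norm_num)
      _ ≤ ∫ t in (0:ℝ)..1, F x t * ‖v‖ := by
          apply intervalIntegral.integral_mono_on (by norm_num)
          · exact (hcont.abs).intervalIntegrable 0 1
          · exact ((hFcont.comp (by fun_prop : Continuous fun t : ℝ => (x, t))).mul
              continuous_const).intervalIntegrable 0 1
          · intro t _
            simpa [hF, Real.norm_eq_abs] using (g (c t)).le_opNorm v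
      _ = ‖v‖ * ∫ t in (0:ℝ)..1, F x t := by
          rw [intervalIntegral.integral_mul_const]; ring
  -- the parametric integral
  set Φ : EuclideanSpace ℝ (Fin d) → ℝ := fun x => ∫ t in (0:ℝ)..1, F x t with hΦ
  have hΦc : Continuous Φ :=
    intervalIntegral.continuous_parametric_intervalIntegral_of_continuous' hFcont 0 1
  have hK : IsCompact (tsupport g + Metric.closedBall 0 ‖v‖) :=
    IsCompact.add hgs (isCompact_closedBall 0 ‖v‖)
  have hΦs : HasCompactSupport Φ := by
    apply HasCompactSupport.intro hK
    intro x hx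
    have hzero : ∀ t ∈ Set.uIcc (0:ℝ) 1, F x t = 0 := by
      intro t ht
      rw [Set.uIcc_of_le (by norm_num : (0:ℝ) ≤ 1)] at ht
      by_contra hne
      have hmem : x + (t - 1) • v ∈ tsupport g := by
        apply subset_tsupport
        intro hzz
        apply hne
        simp [hF, hzz]
      apply hx
      have hxeq : x = (x + (t - 1) • v) + (1 - t) • v := by
        rw [add_assoc, ← add_smul]
        simp
      rw [hxeq]
      apply Set.add_mem_add hmem
      simp only [Metric.mem_closedBall, dist_zero_right, norm_smul, Real.norm_eq_abs]
      have h1 : |1 - t| ≤ 1 := by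
        rw [abs_le]; constructor <;> [linarith [ht.2]; linarith [ht.1]]
      nlinarith [norm_nonneg v, abs_nonneg (1 - t)]
    simp only [hΦ]
    rw [intervalIntegral.integral_congr hzero]
    simp
  have hΦi : Integrable Φ := hΦc.integrable_of_hasCompactSupport hΦs
  have hΦeq : ∀ x, Φ x = ∫ t in Set.Ioc (0:ℝ) 1, F x t := fun x =>
    intervalIntegral.integral_of_le (by norm_num)
  -- integrability of LHS
  have hlhs : Integrable (fun x => |ψ x - ψ (x - v)|) := by
    have h1 : Continuous fun x : EuclideanSpace ℝ (Fin d) => ψ x - ψ (x - v) :=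
      (hψ.continuous).sub ((hψ.continuous).comp (by fun_prop))
    have hneg : HasCompactSupport fun y : EuclideanSpace ℝ (Fin d) => -ψ y := by
      simpa [HasCompactSupport, tsupport, Function.support_neg] using hsupp
    have h2supp : HasCompactSupport fun x : EuclideanSpace ℝ (Fin d) => -ψ (x - v) :=
      hneg.comp_homeomorph (Homeomorph.subRight v)
    have h2 : HasCompactSupport fun x : EuclideanSpace ℝ (Fin d) => ψ x - ψ (x - v) := by
      have h3 := HasCompactSupport.add hsupp h2supp
      rw [show (fun x => ψ x - ψ (x - v)) = ψ + fun x => -ψ (x - v) by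
        funext x; simp [sub_eq_add_neg]]
      exact h3
    exact h1.abs.integrable_of_hasCompactSupport h2.abs
  -- step A
  have stepA : ∫ x, |ψ x - ψ (x - v)| ≤ ∫ x, ‖v‖ * Φ x :=
    integral_mono hlhs (hΦi.const_mul ‖v‖) key
  -- Fubini
  have hprod : Integrable (Function.uncurry F)
      (volume.prod (volume.restrict (Set.Ioc (0:ℝ) 1))) := by
    rw [integrable_prod_iff hFcont.aestronglyMeasurable]
    constructor
    · filter_upwards with x
      exact (hFcont.comp (by fun_prop : Continuous fun t : ℝ => (x, t))).integrableOn_Ioc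
    · apply hΦi.congr
      filter_upwards with x
      rw [hΦeq x]
      simp [Function.uncurry, hF, abs_norm]
  have stepB : ∫ x, Φ x = I := by
    have h1 : ∫ x, Φ x = ∫ x, ∫ t in Set.Ioc (0:ℝ) 1, F x t :=
      integral_congr_ae (Filter.Eventually.of_forall hΦeq)
    have h2 := integral_integral_swap hprod
    rw [h1, h2]
    have h3 : ∀ t : ℝ, (∫ x, F x t) = I := fun t =>
      integral_add_right_eq_self (fun x => ‖g x‖) ((t - 1) • v)
    simp only [h3]
    rw [setIntegral_const]
    simp [Real.volume_Ioc]
  calc ∫ x, |ψ x - ψ (x - v)| ≤ ∫ x, ‖v‖ * Φ x := stepA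
    _ = ‖v‖ * ∫ x, Φ x := by rw [integral_const_mul]
    _ = ‖v‖ * I := by rw [stepB]

end Stmt15Aux

open Stmt15Aux in
/-- A rapidly oscillating zero-mean periodic function `f(x/ε)` is of order `ε`
when tested against `C¹` compactly supported functions. -/
theorem stmt15 (d : ℕ) (hd : 1 ≤ d)
    (f : EuclideanSpace ℝ (Fin d) → ℝ)
    (hf_smooth : ContDiff ℝ (⊤ : ℕ∞) f)
    (hf_per : ∀ (z : EuclideanSpace ℝ (Fin d)) (i : Fin d),
      f (z + EuclideanSpace.single i 1) = f z)
    (hf_mean : ∫ z in unitCell d, f z = 0) :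
    ∃ C : ℝ, ∀ (ε : ℝ), 0 < ε →
      ∀ ψ : EuclideanSpace ℝ (Fin d) → ℝ,
        ContDiff ℝ 1 ψ → HasCompactSupport ψ →
        |∫ x : EuclideanSpace ℝ (Fin d), f (ε⁻¹ • x) * ψ x| ≤
          C * ε * ∫ x : EuclideanSpace ℝ (Fin d), ‖gradient ψ x‖ := by
  have hfc : Continuous f := hf_smooth.continuous
  obtain ⟨M, hM0, hM⟩ := exists_bound hfc hf_per
  refine ⟨M * Real.sqrt d, fun ε hε ψ hψ hsupp => ?_⟩
  have hψc : Continuous ψ := hψ.continuous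
  -- replace gradient by fderiv
  have hgrad : ∫ x, ‖gradient ψ x‖ = ∫ x, ‖fderiv ℝ ψ x‖ := by
    congr 1
    funext x
    rw [gradient]
    exact LinearIsometryEquiv.norm_map _ _
  rw [hgrad]
  set I := ∫ x, ‖fderiv ℝ ψ x‖ with hI
  have hInn : 0 ≤ I := integral_nonneg fun x => norm_nonneg _
  -- notation
  set A := ∫ x : EuclideanSpace ℝ (Fin d), f (ε⁻¹ • x) * ψ x with hA
  set T : EuclideanSpace ℝ (Fin d) → ℝ :=
    fun h => ∫ x : EuclideanSpace ℝ (Fin d), f (ε⁻¹ • x + h) * ψ x with hT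
  have hcell_fin : volume (unitCell d) < ⊤ := by rw [volume_unitCell]; exact ENNReal.one_lt_top
  -- product integrability
  set G : EuclideanSpace ℝ (Fin d) × EuclideanSpace ℝ (Fin d) → ℝ :=
    fun p => f (ε⁻¹ • p.2 + p.1) * ψ p.2 with hG
  have hGcont : Continuous G := by
    apply Continuous.mul
    · exact hfc.comp ((continuous_snd.const_smul ε⁻¹).add continuous_fst)
    · exact hψc.comp continuous_snd
  have hψint : Integrable ψ := hψc.integrable_of_hasCompactSupport hsupp
  have hsect : ∀ h : EuclideanSpace ℝ (Fin d),
      Integrable (fun x => f (ε⁻¹ • x + h) * ψ x) := by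
    intro h
    apply Continuous.integrable_of_hasCompactSupport
    · exact (hfc.comp ((continuous_id.const_smul ε⁻¹).add (continuous_const (y := h)))).mul hψc
    · exact hsupp.mul_left
  have habs : ∀ x, |ψ x| = ‖ψ x‖ := fun x => rfl
  have hGint : Integrable G ((volume.restrict (unitCell d)).prod volume) := by
    rw [integrable_prod_iff hGcont.aestronglyMeasurable]
    constructor
    · filter_upwards with h
      exact hsect h
    · apply Integrable.mono' (g := fun _ => M * ∫ x, |ψ x|)
      · exact integrableOn_const hcell_fin.ne
      · exact (hGcont.norm.aestronglyMeasurable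
            (μ := (volume.restrict (unitCell d)).prod volume)).integral_prod_right'
      · filter_upwards with h
        have h1 : ∀ x, ‖G (h, x)‖ ≤ M * |ψ x| := by
          intro x
          rw [hG]
          simp only [Real.norm_eq_abs, abs_mul]
          exact mul_le_mul_of_nonneg_right (hM _) (abs_nonneg _)
        have h2 : ∫ x, ‖G (h, x)‖ ≤ ∫ x, M * |ψ x| := by
          apply integral_mono ((hsect h).norm) (hψint.abs.const_mul M) h1
        have h3 : (0:ℝ) ≤ ∫ x, ‖G (h, x)‖ := integral_nonneg fun x => norm_nonneg _
        rw [Real.norm_of_nonneg h3]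
        calc ∫ x, ‖G (h, x)‖ ≤ ∫ x, M * |ψ x| := h2
          _ = M * ∫ x, |ψ x| := integral_const_mul M _
  -- T is integrable on the cell and integrates to zero
  have hTint : Integrable T (volume.restrict (unitCell d)) := hGint.integral_prod_left
  have hTzero : ∫ h in unitCell d, T h = 0 := by
    have hswap := integral_integral_swap (f := fun h x => G (h, x)) hGint
    have hinner : ∀ x : EuclideanSpace ℝ (Fin d), (∫ h in unitCell d, G (h, x)) = 0 := by
      intro x
      have h0 : ∫ h in unitCell d, f (ε⁻¹ • x + h) = 0 := key_zero hfc hf_per hf_mean _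
      calc ∫ h in unitCell d, G (h, x)
          = (∫ h in unitCell d, f (ε⁻¹ • x + h)) * ψ x := by
            rw [hG]
            exact integral_mul_const (ψ x) fun h => f (ε⁻¹ • x + h)
        _ = 0 := by rw [h0, zero_mul]
    calc ∫ h in unitCell d, T h
        = ∫ x : EuclideanSpace ℝ (Fin d), ∫ h in unitCell d, G (h, x) := hswap
      _ = ∫ _x : EuclideanSpace ℝ (Fin d), (0:ℝ) := by
          congr 1; funext x; exact hinner x
      _ = 0 := integral_zero _ _
  -- A and shifted integrals
  have hAint : Integrable (fun x => f (ε⁻¹ • x) * ψ x) := by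
    apply Continuous.integrable_of_hasCompactSupport
    · exact (hfc.comp (continuous_id.const_smul ε⁻¹)).mul hψc
    · exact hsupp.mul_left
  have hshift : ∀ h : EuclideanSpace ℝ (Fin d),
      Integrable (fun x => f (ε⁻¹ • x) * ψ (x - ε • h)) := by
    intro h
    apply Continuous.integrable_of_hasCompactSupport
    · exact (hfc.comp (continuous_id.const_smul ε⁻¹)).mul (hψc.comp (continuous_sub_right (ε • h)))
    · exact HasCompactSupport.mul_left (hsupp.comp_homeomorph (Homeomorph.subRight (ε • h)))
  have hTeq : ∀ h : EuclideanSpace ℝ (Fin d),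
      T h = ∫ x, f (ε⁻¹ • x) * ψ (x - ε • h) := by
    intro h
    have hsub := integral_add_right_eq_self (μ := volume)
      (fun x => f (ε⁻¹ • x) * ψ (x - ε • h)) (ε • h)
    rw [← hsub]
    simp only [hT]
    congr 1
    funext x
    have h1 : ε⁻¹ • (x + ε • h) = ε⁻¹ • x + h := by
      rw [smul_add, smul_smul, inv_mul_cancel₀ hε.ne']
      simp
    have h2 : x + ε • h - ε • h = x := by abel
    rw [h1, h2]
  have hdiff : ∀ h : EuclideanSpace ℝ (Fin d),
      A - T h = ∫ x, f (ε⁻¹ • x) * (ψ x - ψ (x - ε • h)) := by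
    intro h
    have heq : (fun x => f (ε⁻¹ • x) * (ψ x - ψ (x - ε • h)))
        = fun x => f (ε⁻¹ • x) * ψ x - f (ε⁻¹ • x) * ψ (x - ε • h) := by
      funext x; ring
    rw [hTeq h, hA, heq, integral_sub hAint (hshift h)]
  -- pointwise bound on the cell
  have hbound : ∀ h ∈ unitCell d, |A - T h| ≤ M * Real.sqrt d * ε * I := by
    intro h hh
    rw [hdiff h]
    have hshiftψ : Integrable (fun x => ψ (x - ε • h)) := by
      apply Continuous.integrable_of_hasCompactSupport
      · exact hψc.comp (by fun_prop)
      · exact hsupp.comp_homeomorph (Homeomorph.subRight (ε • h))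
    have hδint : Integrable (fun x => ψ x - ψ (x - ε • h)) := hψint.sub hshiftψ
    have hint1 : Integrable (fun x => f (ε⁻¹ • x) * (ψ x - ψ (x - ε • h))) := by
      have heq : (fun x => f (ε⁻¹ • x) * (ψ x - ψ (x - ε • h)))
          = fun x => f (ε⁻¹ • x) * ψ x - f (ε⁻¹ • x) * ψ (x - ε • h) := by
        funext x; ring
      rw [heq]
      exact hAint.sub (hshift h)
    have hnorm : ‖ε • h‖ ≤ ε * Real.sqrt d := by
      rw [norm_smul, Real.norm_eq_abs, abs_of_pos hε]
      exact mul_le_mul_of_nonneg_left (norm_le_sqrt_of_mem_unitCell hh) hε.le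
    calc |∫ x, f (ε⁻¹ • x) * (ψ x - ψ (x - ε • h))|
        ≤ ∫ x, |f (ε⁻¹ • x) * (ψ x - ψ (x - ε • h))| := by
          exact norm_integral_le_integral_norm (μ := volume)
            (fun x => f (ε⁻¹ • x) * (ψ x - ψ (x - ε • h)))
      _ ≤ ∫ x, M * |ψ x - ψ (x - ε • h)| := by
          apply integral_mono hint1.abs (hδint.abs.const_mul M)
          intro x
          dsimp only
          rw [abs_mul]
          exact mul_le_mul_of_nonneg_right (hM _) (abs_nonneg _)
      _ = M * ∫ x, |ψ x - ψ (x - ε • h)| := integral_const_mul M _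
      _ ≤ M * (‖ε • h‖ * I) := by
          apply mul_le_mul_of_nonneg_left _ hM0
          exact l1_translation hψ hsupp (ε • h)
      _ ≤ M * Real.sqrt d * ε * I := by
          have h1 : ‖ε • h‖ * I ≤ (ε * Real.sqrt d) * I :=
            mul_le_mul_of_nonneg_right hnorm hInn
          calc M * (‖ε • h‖ * I) ≤ M * ((ε * Real.sqrt d) * I) :=
                mul_le_mul_of_nonneg_left h1 hM0
            _ = M * Real.sqrt d * ε * I := by ring
  -- conclude
  have hconst_int : IntegrableOn (fun _ : EuclideanSpace ℝ (Fin d) => A) (unitCell d) :=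
    integrableOn_const hcell_fin.ne
  have hArep : A = ∫ h in unitCell d, (A - T h) := by
    rw [integral_sub hconst_int hTint, hTzero, sub_zero, setIntegral_const, measureReal_def, volume_unitCell]
    simp
  calc |A| = |∫ h in unitCell d, (A - T h)| := by rw [← hArep]
    _ ≤ ∫ h in unitCell d, |A - T h| := by
        exact norm_integral_le_integral_norm (μ := volume.restrict (unitCell d))
          (fun h => A - T h)
    _ ≤ ∫ _h in unitCell d, M * Real.sqrt d * ε * I := by
        apply setIntegral_mono_on ((hconst_int.sub hTint).abs)
          (integrableOn_const hcell_fin.ne) (measurableSet_unitCell d) hbound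
    _ = M * Real.sqrt d * ε * I := by
        rw [setIntegral_const, measureReal_def, volume_unitCell]
        simp
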